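/- arXiv:2009.14794 — 2 statements merged into one kernel-verified Lean document; each statement's English description precedes it below -/
import Mathlib

section
/- For any vectors x, y in R^d with z = x + y, exp(x^T y) = exp(-(||x||² + ||y||²)/2) · E_{ω ~ N(0, I_d)}[cosh(ω^T z)]. -/
/-!
Expanding `cosh` into exponentials, each term is a Gaussian moment-generating function, which
factorizes over the independent coordinates of `ω`: `E[exp(ωᵀz)] = exp(‖z‖²/2)`. This value is
the same for `z` and `-z`, so `E[cosh(ωᵀz)] = exp(‖x + y‖²/2)`, and
`‖x + y‖² = ‖x‖² + ‖y‖² + 2 xᵀy`.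
-/

open MeasureTheory ProbabilityTheory

noncomputable def stdGaussian (d : ℕ) : Measure (Fin d → ℝ) :=
  Measure.pi fun _ => gaussianReal 0 1

open Real

section ProductMeasure

variable {ι : Type*} [Fintype ι] {μ : ι → Measure ℝ}

lemma exp_sum_mul_eq_prod_exp (ω z : ι → ℝ) :
    rexp (∑ i, ω i * z i) = ∏ i, rexp (z i * ω i) := by
  simp_rw [Real.exp_sum, mul_comm]

lemma integrable_exp_sum_mul_pi [∀ i, SigmaFinite (μ i)] {z : ι → ℝ}
    (hz : ∀ i, Integrable (fun x ↦ rexp (z i * x)) (μ i)) :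
    Integrable (fun ω ↦ rexp (∑ i, ω i * z i)) (Measure.pi μ) := by
  simp_rw [exp_sum_mul_eq_prod_exp]
  exact Integrable.fintype_prod hz

lemma integral_exp_sum_mul_pi [∀ i, SigmaFinite (μ i)] (z : ι → ℝ) :
    ∫ ω, rexp (∑ i, ω i * z i) ∂(Measure.pi μ) = ∏ i, mgf id (μ i) (z i) := by
  simp_rw [exp_sum_mul_eq_prod_exp]
  exact integral_fintype_prod_eq_prod fun i x ↦ rexp (z i * x)

end ProductMeasure

section StdGaussian

variable {d : ℕ}

lemma integrable_exp_sum_mul_stdGaussian (z : Fin d → ℝ) :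
    Integrable (fun ω ↦ rexp (∑ i, ω i * z i)) (stdGaussian d) :=
  integrable_exp_sum_mul_pi fun i ↦ integrable_exp_mul_gaussianReal (z i)

lemma integral_exp_sum_mul_stdGaussian (z : Fin d → ℝ) :
    ∫ ω, rexp (∑ i, ω i * z i) ∂(stdGaussian d) = rexp ((∑ i, z i ^ 2) / 2) := by
  rw [_root_.stdGaussian, integral_exp_sum_mul_pi, mgf_id_gaussianReal, Finset.sum_div,
    Real.exp_sum]
  simp

lemma integral_cosh_sum_mul_stdGaussian (z : Fin d → ℝ) :
    ∫ ω, cosh (∑ i, ω i * z i) ∂(stdGaussian d) = rexp ((∑ i, z i ^ 2) / 2) := by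
  have hneg (ω : Fin d → ℝ) : -∑ i, ω i * z i = ∑ i, ω i * (-z) i := by
    simp [Finset.sum_neg_distrib]
  simp_rw [cosh_eq, hneg]
  rw [integral_div, integral_add (integrable_exp_sum_mul_stdGaussian z)
    (integrable_exp_sum_mul_stdGaussian (-z)), integral_exp_sum_mul_stdGaussian,
    integral_exp_sum_mul_stdGaussian]
  simp

end StdGaussian

/-- For `x y : ℝ^d` and `z = x + y`,
`exp(xᵀy) = exp(-(‖x‖² + ‖y‖²)/2) ⬝ E_{ω ~ N(0,I_d)}[cosh(ωᵀz)]`. -/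
theorem softmax_hyperbolic_cosine_representation (d : ℕ) (x y : Fin d → ℝ) :
    Real.exp (∑ i, x i * y i) =
      Real.exp (-((∑ i, x i ^ 2) + ∑ i, y i ^ 2) / 2) *
        ∫ ω, Real.cosh (∑ i, ω i * (x i + y i)) ∂(stdGaussian d) := by
  have hsq : ∑ i, (x i + y i) ^ 2 = (∑ i, x i ^ 2) + (∑ i, y i ^ 2) + 2 * ∑ i, x i * y i := by
    simp only [add_sq, Finset.sum_add_distrib, Finset.mul_sum, mul_assoc]
    ring
  rw [integral_cosh_sum_mul_stdGaussian (fun i ↦ x i + y i), ← Real.exp_add, hsq]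
  ring_nf
end

section
/- Let x, y ∈ R^d, Δ = x - y, and ω ~ N(0, I_d). The variance of cos(ω^T Δ) equals (1/2)(1 - exp(-||Δ||²))², and consequently the MSE of the m-sample trigonometric estimator of the softmax kernel SM(x,y), built from Ŝ_trig = exp((||x||²+||y||²)/2) cos(ω^T Δ), equals (1/(2m)) exp(||x||²+||y||²)(1 - exp(-||Δ||²))². -/
open MeasureTheory ProbabilityTheory

instance (d : ℕ) : IsProbabilityMeasure (stdGaussian d) := by
  unfold _root_.stdGaussian; infer_instance

section aux
open Complex Real

lemma integral_pi_prod' {ι : Type*} [Fintype ι] {α : Type*} [MeasurableSpace α]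
    (μ : Measure α) [SigmaFinite μ] {𝕜 : Type*} [RCLike 𝕜] (f : ι → α → 𝕜) :
    ∫ x : ι → α, ∏ i, f i (x i) ∂(Measure.pi fun _ => μ) = ∏ i, ∫ x, f i x ∂μ := by
  letI : MeasureSpace α := ⟨μ⟩
  have h : (Measure.pi fun _ : ι => μ) = (volume : Measure (ι → α)) := by
    rw [volume_pi]; rfl
  rw [h]
  exact MeasureTheory.integral_fintype_prod_eq_prod (fun i => f i)

lemma integrable_bdd' {α : Type*} [MeasurableSpace α] {μ : Measure α} [IsFiniteMeasure μ]
    {f : α → ℝ} (hf : AEStronglyMeasurable f μ)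
    (C : ℝ) (h : ∀ a, |f a| ≤ C) : Integrable f μ :=
  (integrable_const C).mono' hf (Filter.Eventually.of_forall h)

lemma integral_cexp_gaussian' (t : ℝ) :
    ∫ u : ℝ, Complex.exp (t * u * I) ∂(gaussianReal 0 1) = Complex.exp (-(t^2)/2) := by
  rw [gaussianReal_of_var_ne_zero 0 one_ne_zero]
  have hmeas : Measurable fun u : ℝ => (gaussianPDFReal 0 1 u).toNNReal :=
    (measurable_gaussianPDFReal 0 1).real_toNNReal
  have hd : gaussianPDF 0 1 = fun u => ((gaussianPDFReal 0 1 u).toNNReal : ENNReal) := by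
    funext u; rw [gaussianPDF_def]; rfl
  rw [hd, integral_withDensity_eq_integral_smul hmeas]
  have hpdf : ∀ u : ℝ, ((gaussianPDFReal 0 1 u).toNNReal : ℝ) =
      (Real.sqrt (2 * π))⁻¹ * Real.exp (-u^2/2) := by
    intro u
    rw [Real.coe_toNNReal _ (gaussianPDFReal_nonneg 0 1 u), gaussianPDFReal]
    norm_num
  have key : ∀ u : ℝ, (gaussianPDFReal 0 1 u).toNNReal • Complex.exp (t * u * I) =
      ((Real.sqrt (2 * π))⁻¹ : ℂ) * (Complex.exp (I * t * u) * Complex.exp (-(1/2 : ℂ) * u ^ 2)) := by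
    intro u
    rw [NNReal.smul_def, Complex.real_smul, hpdf u]
    push_cast
    rw [mul_assoc, ← Complex.exp_add, ← Complex.exp_add]
    ring_nf
  simp_rw [key]
  rw [integral_const_mul, fourierIntegral_gaussian (by norm_num : (0:ℝ) < ((1/2 : ℂ)).re) t]
  have h2 : (↑π / (1/2 : ℂ)) = ((2 * π : ℝ) : ℂ) := by push_cast; ring
  rw [h2, show ((1:ℂ)/2) = ((1/2 : ℝ) : ℂ) by norm_num,
    ← Complex.ofReal_cpow (by positivity), ← Real.sqrt_eq_rpow]
  have h3 : ((Real.sqrt (2 * π) : ℝ) : ℂ) ≠ 0 := by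
    simp only [ne_eq, Complex.ofReal_eq_zero]
    positivity
  rw [← mul_assoc, inv_mul_cancel₀ h3, one_mul]
  congr 1
  push_cast
  ring

lemma meas_cos' (d : ℕ) (Δ : Fin d → ℝ) :
    Measurable fun ω : Fin d → ℝ => Real.cos (∑ i, ω i * Δ i) := by fun_prop

lemma int_cos' (d : ℕ) (Δ : Fin d → ℝ) :
    Integrable (fun ω : Fin d → ℝ => Real.cos (∑ i, ω i * Δ i)) (stdGaussian d) :=
  integrable_bdd' (meas_cos' d Δ).aestronglyMeasurable 1 fun _ => Real.abs_cos_le_one _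

lemma int_cos_sq' (d : ℕ) (Δ : Fin d → ℝ) :
    Integrable (fun ω : Fin d → ℝ => Real.cos (∑ i, ω i * Δ i) ^ 2) (stdGaussian d) := by
  refine integrable_bdd' ((meas_cos' d Δ).pow_const 2).aestronglyMeasurable 1 fun ω => ?_
  rw [_root_.abs_of_nonneg (sq_nonneg _)]
  exact Real.cos_sq_le_one _

lemma integral_cos_std (d : ℕ) (Δ : Fin d → ℝ) :
    ∫ ω, Real.cos (∑ i, ω i * Δ i) ∂(stdGaussian d) = Real.exp (-(∑ i, Δ i ^ 2)/2) := by
  have h1 : ∀ ω : Fin d → ℝ, Real.cos (∑ i, ω i * Δ i) =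
      (∏ i, Complex.exp ((Δ i : ℂ) * (ω i) * I)).re := by
    intro ω
    rw [← Complex.exp_sum]
    have : ∑ i, (Δ i : ℂ) * (ω i) * I = ((∑ i, ω i * Δ i : ℝ) : ℂ) * I := by
      push_cast
      rw [Finset.sum_mul]
      exact Finset.sum_congr rfl fun i _ => by ring
    rw [this, Complex.exp_ofReal_mul_I_re]
  simp_rw [h1]
  have hmeas : Measurable fun ω : Fin d → ℝ => ∏ i, Complex.exp ((Δ i : ℂ) * (ω i) * I) := by
    fun_prop
  have hint : Integrable (fun ω : Fin d → ℝ => ∏ i, Complex.exp ((Δ i : ℂ) * (ω i) * I))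
      (stdGaussian d) := by
    refine (integrable_const (1:ℝ)).mono' hmeas.aestronglyMeasurable
      (Filter.Eventually.of_forall fun ω => ?_)
    rw [norm_prod]
    calc ∏ i, ‖Complex.exp ((Δ i : ℂ) * (ω i) * I)‖ = ∏ i, (1:ℝ) := by
          refine Finset.prod_congr rfl fun i _ => ?_
          rw [show (Δ i : ℂ) * (ω i) * I = ((Δ i * ω i : ℝ) : ℂ) * I by push_cast; ring,
            Complex.norm_exp_ofReal_mul_I]
      _ ≤ 1 := by simp
  rw [show Complex.re = RCLike.re from rfl, integral_re hint]
  have h2 : ∫ ω, ∏ i, Complex.exp ((Δ i : ℂ) * (ω i) * I) ∂(stdGaussian d) =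
      Complex.exp (((-(∑ i, Δ i ^ 2)/2 : ℝ)) : ℂ) := by
    rw [show (stdGaussian d) = Measure.pi fun _ => gaussianReal 0 1 from rfl,
      integral_pi_prod' (gaussianReal 0 1) (fun i u => Complex.exp ((Δ i : ℂ) * u * I))]
    simp_rw [integral_cexp_gaussian']
    rw [← Complex.exp_sum]
    congr 1
    push_cast
    rw [← Finset.sum_div, ← Finset.sum_neg_distrib]
  rw [h2, RCLike.re_to_complex, Complex.exp_ofReal_re]

lemma integral_cos_sq_std (d : ℕ) (Δ : Fin d → ℝ) :
    ∫ ω, Real.cos (∑ i, ω i * Δ i) ^ 2 ∂(stdGaussian d)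
      = (1 + Real.exp (-(2 * ∑ i, Δ i ^ 2))) / 2 := by
  have h1 : ∀ ω : Fin d → ℝ, Real.cos (∑ i, ω i * Δ i) ^ 2
      = 1/2 + (1/2) * Real.cos (∑ i, ω i * (2 * Δ i)) := by
    intro ω
    have h : ∑ i, ω i * (2 * Δ i) = 2 * ∑ i, ω i * Δ i := by
      rw [Finset.mul_sum]
      exact Finset.sum_congr rfl fun i _ => by ring
    rw [h, Real.cos_sq]
    ring
  simp_rw [h1]
  rw [integral_add (integrable_const _) ((int_cos' d (fun i => 2 * Δ i)).const_mul _)]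
  rw [integral_const_mul, integral_cos_std d (fun i => 2 * Δ i), integral_const]
  have : ∑ i, (2 * Δ i) ^ 2 = 4 * ∑ i, Δ i ^ 2 := by
    rw [Finset.mul_sum]; exact Finset.sum_congr rfl fun i _ => by ring
  rw [this]
  simp
  ring_nf

end aux

/-- For `x, y : ℝ^d`, `Δ = x - y`, `ω ~ N(0, I_d)`:
`Var(cos(ωᵀΔ)) = (1/2)(1 - exp(-‖Δ‖²))²`, and consequently the MSE of the `m`-sample
trigonometric estimator `exp((‖x‖²+‖y‖²)/2) ⬝ (1/m) ∑ⱼ cos(ωⱼᵀΔ)` of the softmax kernel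
`SM(x,y) = exp(xᵀy)` equals `(1/(2m)) exp(‖x‖²+‖y‖²)(1 - exp(-‖Δ‖²))²`. -/
theorem trig_estimator_variance_and_mse (d m : ℕ) (hm : 1 ≤ m) (x y : Fin d → ℝ) :
    ((∫ ω, Real.cos (∑ i, ω i * (x i - y i)) ^ 2 ∂(stdGaussian d)) -
        (∫ ω, Real.cos (∑ i, ω i * (x i - y i)) ∂(stdGaussian d)) ^ 2 =
      (1 / 2) * (1 - Real.exp (-∑ i, (x i - y i) ^ 2)) ^ 2) ∧
    (∫ ωs, (Real.exp (((∑ i, x i ^ 2) + ∑ i, y i ^ 2) / 2) *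
          ((m : ℝ)⁻¹ * ∑ j : Fin m, Real.cos (∑ i, ωs j i * (x i - y i))) -
          Real.exp (∑ i, x i * y i)) ^ 2 ∂(Measure.pi fun _ : Fin m => stdGaussian d) =
      (1 / (2 * m)) * Real.exp ((∑ i, x i ^ 2) + ∑ i, y i ^ 2) *
        (1 - Real.exp (-∑ i, (x i - y i) ^ 2)) ^ 2) := by
  have hm0 : (m:ℝ) ≠ 0 := Nat.cast_ne_zero.2 (by omega)
  have hcsq : Real.exp (-(∑ i, (x i - y i) ^ 2)/2) ^ 2
      = Real.exp (-∑ i, (x i - y i) ^ 2) := by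
    rw [sq, ← Real.exp_add]; congr 1; ring
  have hc4 : Real.exp (-(2 * ∑ i, (x i - y i) ^ 2))
      = Real.exp (-(∑ i, (x i - y i) ^ 2)/2) ^ 4 := by
    rw [show (4:ℕ) = 2 * 2 from rfl, pow_mul, hcsq, sq, ← Real.exp_add]
    congr 1
    ring
  constructor
  · rw [integral_cos_sq_std d (fun i => x i - y i),
      integral_cos_std d (fun i => x i - y i), hc4, ← hcsq]
    ring
  -- Part 2
  set c : ℝ := Real.exp (-(∑ i, (x i - y i) ^ 2)/2) with hc
  set V : ℝ := (1/2) * (1 - Real.exp (-∑ i, (x i - y i) ^ 2)) ^ 2 with hV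
  set g : (Fin d → ℝ) → ℝ := fun ω => Real.cos (∑ i, ω i * (x i - y i)) - c with hgdef
  have hgmeas : Measurable g := (meas_cos' d _).sub measurable_const
  have hc_pos : 0 < c := Real.exp_pos _
  have hc_le : c ≤ 1 := by
    rw [hc, Real.exp_le_one_iff]
    have : (0:ℝ) ≤ ∑ i, (x i - y i)^2 := Finset.sum_nonneg fun i _ => sq_nonneg _
    linarith
  have hgbd : ∀ ω, |g ω| ≤ 2 := by
    intro ω
    rw [hgdef, abs_le]
    have h1 := Real.cos_le_one (∑ i, ω i * (x i - y i))
    have h2 := Real.neg_one_le_cos (∑ i, ω i * (x i - y i))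
    constructor <;> simp only <;> nlinarith
  have hg0 : ∫ ω, g ω ∂(stdGaussian d) = 0 := by
    rw [hgdef]
    rw [integral_sub (int_cos' d (fun i => x i - y i)) (integrable_const c),
      integral_cos_std d (fun i => x i - y i), integral_const]
    simp [hc]
  have hgV : ∫ ω, g ω ^ 2 ∂(stdGaussian d) = V := by
    have hexp : ∀ ω : Fin d → ℝ, g ω ^ 2
        = Real.cos (∑ i, ω i * (x i - y i)) ^ 2
          + ((-(2*c)) * Real.cos (∑ i, ω i * (x i - y i)) + c^2) := by
      intro ω; rw [hgdef]; ring
    simp_rw [hexp]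
    have hint2 : Integrable (fun ω : Fin d → ℝ =>
        (-(2*c)) * Real.cos (∑ i, ω i * (x i - y i)) + c^2) (stdGaussian d) := by
      exact ((int_cos' d (fun i => x i - y i)).const_mul _).add (integrable_const _)
    rw [integral_add (int_cos_sq' d (fun i => x i - y i)) hint2,
      integral_add ((int_cos' d (fun i => x i - y i)).const_mul _) (integrable_const _),
      integral_const_mul, integral_cos_sq_std d (fun i => x i - y i),
      integral_cos_std d (fun i => x i - y i), integral_const]
    simp only [probReal_univ, one_smul]
    rw [hc4, hV, ← hcsq, ← hc]
    ring
  have hgint : Integrable g (stdGaussian d) := integrable_bdd' hgmeas.aestronglyMeasurable 2 hgbd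
  -- pair integrals over the product measure
  have hint1 : ∀ j k : Fin m, Integrable
      (fun ωs : Fin m → Fin d → ℝ => g (ωs j) * g (ωs k))
      (Measure.pi fun _ : Fin m => stdGaussian d) := by
    intro j k
    refine integrable_bdd' ?_ 4 ?_
    · exact ((hgmeas.comp (measurable_pi_apply j)).mul
        (hgmeas.comp (measurable_pi_apply k))).aestronglyMeasurable
    · intro ωs
      rw [abs_mul]
      calc |g (ωs j)| * |g (ωs k)| ≤ 2 * 2 :=
            mul_le_mul (hgbd _) (hgbd _) (abs_nonneg _) (by norm_num)
        _ = 4 := by norm_num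
  have hpair : ∀ j k : Fin m,
      ∫ ωs, g (ωs j) * g (ωs k) ∂(Measure.pi fun _ : Fin m => stdGaussian d)
        = if j = k then V else 0 := by
    intro j k
    by_cases hjk : j = k
    · subst hjk
      rw [if_pos rfl]
      have hpt : ∀ ωs : Fin m → Fin d → ℝ,
          g (ωs j) * g (ωs j) = ∏ l, (fun l (ω : Fin d → ℝ) =>
            if l = j then g ω ^ 2 else 1) l (ωs l) := by
        intro ωs
        simp only
        rw [Finset.prod_ite_eq' Finset.univ j (fun l => g (ωs l) ^ 2)]
        simp [sq]
      simp_rw [hpt]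
      rw [show (∫ ωs : Fin m → Fin d → ℝ, ∏ l, (if l = j then g (ωs l) ^ 2 else (1:ℝ))
            ∂(Measure.pi fun _ : Fin m => stdGaussian d))
          = ∏ l, ∫ ω, (if l = j then g ω ^ 2 else (1:ℝ)) ∂(stdGaussian d) from
        integral_pi_prod' (stdGaussian d) (fun l ω => if l = j then g ω ^ 2 else 1)]
      have heach : ∀ l : Fin m,
          (∫ ω, (if l = j then g ω ^ 2 else 1) ∂(stdGaussian d))
            = if l = j then V else 1 := by
        intro l
        split_ifs with h
        · exact hgV
        · simp
      simp_rw [heach]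
      rw [Finset.prod_ite_eq' Finset.univ j (fun _ => V)]
      simp
    · rw [if_neg hjk]
      have hpt : ∀ ωs : Fin m → Fin d → ℝ,
          g (ωs j) * g (ωs k) = ∏ l, (fun l (ω : Fin d → ℝ) =>
            if l = j then g ω else if l = k then g ω else 1) l (ωs l) := by
        intro ωs
        simp only
        rw [← Finset.prod_subset (Finset.subset_univ ({j, k} : Finset (Fin m)))
          (fun l _ hl => ?_)]
        · rw [Finset.prod_pair hjk]
          simp [hjk, Ne.symm hjk]
        · simp only [Finset.mem_insert, Finset.mem_singleton, not_or] at hl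
          simp [hl.1, hl.2]
      simp_rw [hpt]
      rw [show (∫ ωs : Fin m → Fin d → ℝ, ∏ l, (if l = j then g (ωs l)
              else if l = k then g (ωs l) else (1:ℝ))
            ∂(Measure.pi fun _ : Fin m => stdGaussian d))
          = ∏ l, ∫ ω, (if l = j then g ω else if l = k then g ω else (1:ℝ)) ∂(stdGaussian d) from
        integral_pi_prod' (stdGaussian d)
          (fun l ω => if l = j then g ω else if l = k then g ω else 1)]
      refine Finset.prod_eq_zero (Finset.mem_univ j) ?_
      simp only [if_pos rfl]
      exact hg0
  have hsum : ∫ ωs, (∑ j, g (ωs j)) ^ 2 ∂(Measure.pi fun _ : Fin m => stdGaussian d)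
      = m * V := by
    have hexp : ∀ ωs : Fin m → Fin d → ℝ,
        (∑ j, g (ωs j)) ^ 2 = ∑ j, ∑ k, g (ωs j) * g (ωs k) := by
      intro ωs
      rw [sq, Finset.sum_mul_sum]
    simp_rw [hexp]
    rw [integral_finset_sum _ (fun j _ => integrable_finset_sum _ fun k _ => hint1 j k)]
    have : ∀ j : Fin m, ∫ ωs, ∑ k, g (ωs j) * g (ωs k)
        ∂(Measure.pi fun _ : Fin m => stdGaussian d) = V := by
      intro j
      rw [integral_finset_sum _ (fun k _ => hint1 j k)]
      simp_rw [hpair j]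
      simp
    simp_rw [this]
    simp [mul_comm]
  -- pointwise rewriting of the integrand
  have hAc : Real.exp (∑ i, x i * y i)
      = Real.exp (((∑ i, x i ^ 2) + ∑ i, y i ^ 2) / 2) * c := by
    rw [hc, ← Real.exp_add]
    congr 1
    have hS : ∑ i, (x i - y i) ^ 2
        = (∑ i, x i ^ 2) + (∑ i, y i ^ 2) - 2 * ∑ i, x i * y i := by
      rw [Finset.mul_sum, ← Finset.sum_add_distrib, ← Finset.sum_sub_distrib]
      exact Finset.sum_congr rfl fun i _ => by ring
    rw [hS]
    ring
  have hpt2 : ∀ ωs : Fin m → Fin d → ℝ,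
      (Real.exp (((∑ i, x i ^ 2) + ∑ i, y i ^ 2) / 2) *
          ((m : ℝ)⁻¹ * ∑ j : Fin m, Real.cos (∑ i, ωs j i * (x i - y i))) -
          Real.exp (∑ i, x i * y i)) ^ 2
        = Real.exp (((∑ i, x i ^ 2) + ∑ i, y i ^ 2) / 2) ^ 2 * ((m:ℝ)⁻¹) ^ 2 *
          (∑ j, g (ωs j)) ^ 2 := by
    intro ωs
    rw [hAc]
    have hgs : ∑ j, g (ωs j)
        = (∑ j : Fin m, Real.cos (∑ i, ωs j i * (x i - y i))) - m * c := by
      rw [hgdef]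
      rw [Finset.sum_sub_distrib, Finset.sum_const, Finset.card_univ, Fintype.card_fin,
        nsmul_eq_mul]
    rw [hgs]
    field_simp
  simp_rw [hpt2]
  rw [integral_const_mul, hsum]
  have hA2 : Real.exp (((∑ i, x i ^ 2) + ∑ i, y i ^ 2) / 2) ^ 2
      = Real.exp ((∑ i, x i ^ 2) + ∑ i, y i ^ 2) := by
    rw [sq, ← Real.exp_add]
    congr 1
    ring
  rw [hA2, hV]
  field_simp
end
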